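/- arXiv:2307.12661 — 2 statements merged into one kernel-verified Lean document; each statement's English description precedes it below -/
import Mathlib

section
/- Suppose the feasible set G of the asymptotic-stability semi-infinite program has nonempty interior. Suppose (y₁*, …, y_{M+L}*) ∈ N^{M+L} attains the supremum over N^{M+L} of the relaxed value map Φ, and (λ*, c*) ∈ G(y₁*, …, y_{M+L}*) minimizes ψ over G(y₁*, …, y_{M+L}*). Then V(z) = Σ_{i=1}^M λ*_i φ_i(z) and W(z) = Σ_{j=1}^L c*_j w_j(z) satisfy V(0) = 0 = W(0), V(y) > 0 and W(y) > 0 for every y ∈ N \ {0}, and ⟨∇V(y), f(y)⟩ + W(y) ≤ 0 for every y ∈ N; consequently the origin is asymptotically stable for the system ẋ = f(x), with stability margin W. -/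
/-- A function `α : [0,∞) → [0,∞)` is of class K if it is continuous,
strictly increasing, and `α 0 = 0`. -/
def IsClassK (α : ℝ → ℝ) : Prop :=
  ContinuousOn α (Set.Ici 0) ∧ StrictMonoOn α (Set.Ici 0) ∧ α 0 = 0 ∧
    ∀ x ∈ Set.Ici (0 : ℝ), 0 ≤ α x

/-- The origin is Lyapunov stable for `ẋ = f(x)`. -/
def LyapunovStable (n : ℕ) (f : EuclideanSpace ℝ (Fin n) → EuclideanSpace ℝ (Fin n)) : Prop :=
  ∀ ε > (0 : ℝ), ∃ δ > (0 : ℝ), ∀ x : ℝ → EuclideanSpace ℝ (Fin n),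
    (∀ t, 0 ≤ t → HasDerivAt x (f (x t)) t) → ‖x 0‖ < δ →
      ∀ t, 0 ≤ t → ‖x t‖ < ε

/-- The origin is asymptotically stable for `ẋ = f(x)`: it is Lyapunov stable and
asymptotically attractive. -/
def AsymptoticallyStable (n : ℕ)
    (f : EuclideanSpace ℝ (Fin n) → EuclideanSpace ℝ (Fin n)) : Prop :=
  LyapunovStable n f ∧
    ∀ ε > (0 : ℝ), ∃ r > (0 : ℝ), ∃ T > (0 : ℝ), ∀ x : ℝ → EuclideanSpace ℝ (Fin n),
      (∀ t, 0 ≤ t → HasDerivAt x (f (x t)) t) → ‖x 0‖ < r →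
        ∀ t, T < t → ‖x t‖ < ε

/-!
The constraints at a single point `y` cut out a closed convex set `C y` of coefficients in
`ℝ^M × ℝ^L`, a space of dimension `M + L`, and `G = ⋂_{y ∈ N} C y`. Let `q` minimize `ψ` over `G`.
If `ψ (λ*, c*) < ψ q`, a sublevel set `{ψ ≤ c}` with `c` in between is compact, convex and
disjoint from `G`; by Helly's theorem it is already disjoint from `M + L` of the sets `C y`, so `Φ`
at these points is at least `c > Φ (y*)`, contradicting maximality. Hence `q` also minimizes `ψ`
over `G (y*)`, and strict convexity gives `(λ*, c*) = q ∈ G`. The constraints of `G` make `V` a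
Lyapunov function with margin `W`, and a first-exit-time argument gives stability.
-/

open Set Filter Topology Module Finset

lemma exists_fin_range_superset {ι : Type*} [Nonempty ι] {d : ℕ} (J : Finset ι) (hJ : #J ≤ d) :
    ∃ ys : Fin d → ι, ↑J ⊆ range ys := by
  classical
  refine ⟨fun k => if h : (k : ℕ) < #J then J.equivFin.symm ⟨k, h⟩ else Classical.arbitrary ι,
    fun i hi => ⟨Fin.castLE hJ (J.equivFin ⟨i, hi⟩), ?_⟩⟩
  simp

lemma Continuous.isCompact_setOf_le_of_tendsto_cocompact {X : Type*} [TopologicalSpace X]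
    {ψ : X → ℝ} (hψ : Continuous ψ) (hψ_top : Tendsto ψ (cocompact X) atTop) (c : ℝ) :
    IsCompact {p | ψ p ≤ c} := by
  obtain ⟨K, hK, hKc⟩ := mem_cocompact.1 (hψ_top.eventually_gt_atTop c)
  refine hK.of_isClosed_subset (isClosed_le hψ continuous_const) fun p (hp : ψ p ≤ c) => ?_
  by_contra hpK
  exact (hKc hpK).not_ge hp

lemma tendsto_cocompact_atTop_of_coercive {E : Type*} [NormedAddCommGroup E] [ProperSpace E]
    {ψ : E → ℝ} (h : ∀ C : ℝ, ∃ R : ℝ, ∀ p, R ≤ ‖p‖ → C ≤ ψ p) :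
    Tendsto ψ (cocompact E) atTop :=
  tendsto_atTop.2 fun C =>
    let ⟨R, hR⟩ := h C
    (tendsto_norm_cocompact_atTop.eventually_ge_atTop R).mono hR

section Helly

variable {E : Type*} [NormedAddCommGroup E] [NormedSpace ℝ E] [FiniteDimensional ℝ E]
  {ι : Type*} [Nonempty ι] {C : ι → Set E}

/-- Helly's theorem, with the compact convex set `S` occupying one of the `finrank + 1` slots. -/
lemma Convex.exists_fin_disjoint_iInter {d : ℕ} (hd : finrank ℝ E ≤ d) {S : Set E}
    (hS : Convex ℝ S) (hSc : IsCompact S) (hC : ∀ i, Convex ℝ (C i))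
    (hCc : ∀ i, IsClosed (C i)) (hne : (⋂ i, C i).Nonempty) (hdisj : Disjoint S (⋂ i, C i)) :
    ∃ ys : Fin d → ι, Disjoint S (⋂ k, C (ys k)) := by
  classical
  obtain ⟨g, hg⟩ := hne
  rw [mem_iInter] at hg
  obtain ⟨R, hR⟩ := (hSc.insert g).isBounded.subset_closedBall 0
  -- cutting the `C i` down to a ball around `S` and `g` makes them compact without changing
  -- which subfamilies meet `S`
  let F : Option ι → Set E := fun o => o.elim S fun i => C i ∩ Metric.closedBall 0 R
  obtain ⟨I, hI, hIF⟩ :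
      ∃ I : Finset (Option ι), #I ≤ finrank ℝ E + 1 ∧ ¬ (⋂ o ∈ I, F o).Nonempty := by
    by_contra! h
    have hFconv : ∀ o, Convex ℝ (F o) := by
      rintro (_ | i)
      exacts [hS, (hC i).inter (convex_closedBall 0 R)]
    have hFcpt : ∀ o, IsCompact (F o) := by
      rintro (_ | i)
      exacts [hSc, (isCompact_closedBall 0 R).inter_left (hCc i)]
    obtain ⟨p, hp⟩ := Convex.helly_theorem_compact' hFconv hFcpt h
    rw [iInter_option, mem_inter_iff, mem_iInter] at hp
    exact hdisj.ne_of_mem hp.1 (mem_iInter.2 fun i => (hp.2 i).1) rfl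
  have hnone : none ∈ I := by
    by_contra hnone
    refine hIF ⟨g, mem_iInter₂.2 fun o ho => ?_⟩
    cases o with
    | none => exact absurd ho hnone
    | some i => exact ⟨hg i, hR (mem_insert g S)⟩
  obtain ⟨ys, hys⟩ := exists_fin_range_superset (d := d) I.eraseNone
    (by rw [card_eraseNone_of_mem hnone]; omega)
  refine ⟨ys, Set.disjoint_left.2 fun p hpS hpC => hIF ⟨p, mem_iInter₂.2 fun o ho => ?_⟩⟩
  cases o with
  | none => exact hpS
  | some i =>
    obtain ⟨k, rfl⟩ := hys (mem_eraseNone.2 ho)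
    exact ⟨mem_iInter.1 hpC k, hR (mem_insert_of_mem _ hpS)⟩

theorem mem_iInter_of_forall_sInf_image_le {d : ℕ} (hd : finrank ℝ E ≤ d)
    (hC : ∀ i, Convex ℝ (C i)) (hCc : ∀ i, IsClosed (C i)) (hne : (⋂ i, C i).Nonempty)
    {ψ : E → ℝ} (hψ : Continuous ψ) (hψ_conv : StrictConvexOn ℝ univ ψ)
    (hψ_top : Tendsto ψ (cocompact E) atTop) {ys₀ : Fin d → ι} {p : E}
    (hp : p ∈ ⋂ k, C (ys₀ k)) (hp_min : IsMinOn ψ (⋂ k, C (ys₀ k)) p)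
    (h_max : ∀ ys : Fin d → ι, sInf (ψ '' ⋂ k, C (ys k)) ≤ ψ p) :
    p ∈ ⋂ i, C i := by
  obtain ⟨q₀, hq₀⟩ := hne
  obtain ⟨q, hq, hq_min⟩ := hψ.continuousOn.exists_isMinOn' (isClosed_iInter hCc) hq₀
    ((hψ_top.eventually_ge_atTop (ψ q₀)).filter_mono inf_le_left)
  have h_sub : ∀ ys : Fin d → ι, ⋂ i, C i ⊆ ⋂ k, C (ys k) := fun ys =>
    iInter_mono' fun k => ⟨ys k, subset_rfl⟩
  have hqp : ψ q ≤ ψ p := by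
    by_contra! hlt
    obtain ⟨c, hpc, hcq⟩ := exists_between hlt
    obtain ⟨ys, hys⟩ := Convex.exists_fin_disjoint_iInter hd
      (by simpa using hψ_conv.convexOn.convex_le c)
      (hψ.isCompact_setOf_le_of_tendsto_cocompact hψ_top c) hC hCc ⟨q₀, hq₀⟩
      (Set.disjoint_left.2 fun x (hxc : ψ x ≤ c) hx => (hq_min hx).not_gt (hxc.trans_lt hcq))
    have : c ≤ sInf (ψ '' ⋂ k, C (ys k)) :=
      le_csInf (Set.Nonempty.image ψ ⟨q₀, h_sub ys hq₀⟩) <| forall_mem_image.2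
        fun x hx => le_of_not_ge fun hxc => Set.disjoint_left.1 hys hxc hx
    linarith [h_max ys]
  have hq_min' : IsMinOn ψ (⋂ k, C (ys₀ k)) q := fun x hx => hqp.trans (hp_min hx)
  have hR := convex_iInter fun k => hC (ys₀ k)
  rwa [(hψ_conv.subset (subset_univ _) hR).eq_of_isMinOn hp_min hq_min' hp (h_sub ys₀ hq)]

end Helly

lemma IsClassK.pos {α : ℝ → ℝ} (hα : IsClassK α) {x : ℝ} (hx : 0 < x) : 0 < α x := by
  simpa [hα.2.2.1] using hα.2.1 self_mem_Ici hx.le hx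

lemma IsClassK.nonneg {α : ℝ → ℝ} (hα : IsClassK α) {x : ℝ} (hx : 0 ≤ x) : 0 ≤ α x :=
  hα.2.2.2 x hx

lemma ContinuousOn.exists_first_eq {g : ℝ → ℝ} {a b c : ℝ} (hab : a ≤ b)
    (hg : ContinuousOn g (Icc a b)) (ha : g a < c) (hb : c ≤ g b) :
    ∃ t ∈ Icc a b, g t = c ∧ ∀ s ∈ Ico a t, g s < c := by
  obtain ⟨t, ⟨htab, hct⟩, ht_least⟩ : ∃ t, IsLeast {s ∈ Icc a b | c ≤ g s} t :=
    (isCompact_Icc.of_isClosed_subset (hg.preimage_isClosed_of_isClosed isClosed_Icc isClosed_Ici)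
      inter_subset_left).exists_isLeast ⟨b, right_mem_Icc.2 hab, hb⟩
  have h_before : ∀ s ∈ Ico a t, g s < c := fun s hs =>
    lt_of_not_ge fun hcs => (ht_least ⟨⟨hs.1, hs.2.le.trans htab.2⟩, hcs⟩).not_gt hs.2
  obtain ⟨s, hs, hgs⟩ := intermediate_value_Icc htab.1 (hg.mono (Icc_subset_Icc_right htab.2))
    ⟨ha.le, hct⟩
  obtain rfl : s = t := hs.2.eq_or_lt.resolve_right fun hst => (h_before s ⟨hs.1, hst⟩).ne hgs
  exact ⟨s, htab, hgs, h_before⟩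

lemma apply_le_apply_of_fderiv_apply_nonpos {E : Type*} [NormedAddCommGroup E] [NormedSpace ℝ E]
    {V : E → ℝ} (hV : Differentiable ℝ V) {x x' : ℝ → E} {a b : ℝ} (hab : a ≤ b)
    (hx : ∀ t ∈ Icc a b, HasDerivAt x (x' t) t)
    (hdec : ∀ t ∈ Icc a b, fderiv ℝ V (x t) (x' t) ≤ 0) : V (x b) ≤ V (x a) := by
  have hd : ∀ t ∈ Icc a b, HasDerivAt (V ∘ x) (fderiv ℝ V (x t) (x' t)) t := fun t ht =>
    (hV (x t)).hasFDerivAt.comp_hasDerivAt t (hx t ht)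
  refine antitoneOn_of_hasDerivWithinAt_nonpos (f' := fun t => fderiv ℝ V (x t) (x' t))
    (convex_Icc a b) (fun t ht => (hd t ht).continuousAt.continuousWithinAt) (fun t ht => ?_)
    (fun t ht => ?_) (left_mem_Icc.2 hab) (right_mem_Icc.2 hab) hab
  · exact (hd t (interior_subset ht)).hasDerivWithinAt
  · exact hdec t (interior_subset ht)

theorem lyapunovStable_of_isClassK_bounds {n : ℕ}
    {f : EuclideanSpace ℝ (Fin n) → EuclideanSpace ℝ (Fin n)} {N : Set (EuclideanSpace ℝ (Fin n))}
    (hN : N ∈ 𝓝 0) {α β : ℝ → ℝ} (hα : IsClassK α) (hβ : IsClassK β)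
    {V : EuclideanSpace ℝ (Fin n) → ℝ} (hV : Differentiable ℝ V)
    (hαV : ∀ y ∈ N, α ‖y‖ ≤ V y) (hVβ : ∀ y ∈ N, V y ≤ β ‖y‖)
    (hdec : ∀ y ∈ N, fderiv ℝ V y (f y) ≤ 0) : LyapunovStable n f := by
  intro ε hε
  obtain ⟨r, hr, hrN⟩ := Metric.nhds_basis_closedBall.mem_iff.1 hN
  set ε₀ := min ε r
  have hε₀ : 0 < ε₀ := lt_min hε hr
  have hball : ∀ y : EuclideanSpace ℝ (Fin n), ‖y‖ ≤ ε₀ → y ∈ N := fun y hy =>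
    hrN (mem_closedBall_zero_iff.2 (hy.trans (min_le_right _ _)))
  obtain ⟨δ, hδ, hβδ⟩ := Metric.continuousWithinAt_iff.1 (hβ.1 0 self_mem_Ici) _ (hα.pos hε₀)
  refine ⟨min δ ε₀, lt_min hδ hε₀, fun x hx hx₀ t ht => ?_⟩
  by_contra! hxt
  obtain ⟨t₁, ht₁, hxt₁, h_before⟩ := ContinuousOn.exists_first_eq ht
    (fun s hs => (hx s hs.1).continuousAt.norm.continuousWithinAt) (hx₀.trans_le (min_le_right _ _))
    ((min_le_left _ _).trans hxt)
  have h_inside : ∀ s ∈ Icc 0 t₁, x s ∈ N := fun s hs =>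
    hball _ (hs.2.eq_or_lt.elim (fun h => (h ▸ hxt₁).le) fun h => (h_before s ⟨hs.1, h⟩).le)
  have hβx₀ : β ‖x 0‖ < α ε₀ := by
    have := hβδ (norm_nonneg (x 0)) (by simpa using hx₀.trans_le (min_le_left _ _))
    rw [hβ.2.2.1, Real.dist_eq, sub_zero] at this
    exact (le_abs_self _).trans_lt this
  have hV_decr : V (x t₁) ≤ V (x 0) :=
    apply_le_apply_of_fderiv_apply_nonpos hV ht₁.1 (fun s hs => hx s hs.1) fun s hs =>
      hdec _ (h_inside s hs)
  refine lt_irrefl (α ε₀) ?_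
  calc α ε₀ = α ‖x t₁‖ := by rw [hxt₁]
    _ ≤ V (x t₁) := hαV _ (h_inside t₁ (right_mem_Icc.2 ht₁.1))
    _ ≤ V (x 0) := hV_decr
    _ ≤ β ‖x 0‖ := hVβ _ (h_inside 0 (left_mem_Icc.2 ht₁.1))
    _ < α ε₀ := hβx₀

lemma LyapunovStable.asymptoticallyStable {n : ℕ}
    {f : EuclideanSpace ℝ (Fin n) → EuclideanSpace ℝ (Fin n)} (h : LyapunovStable n f) :
    AsymptoticallyStable n f :=
  ⟨h, fun ε hε =>
    let ⟨δ, hδ, hx⟩ := h ε hε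
    ⟨δ, hδ, 1, one_pos, fun x hsol hx₀ t ht => hx x hsol hx₀ t (by linarith)⟩⟩

section Constraints

variable {E : Type*} [NormedAddCommGroup E] [NormedSpace ℝ E] {M L : ℕ}

def lyapunovConstraints (α β γ : ℝ → ℝ) (φ : Fin M → E → ℝ) (w : Fin L → E → ℝ) (f : E → E)
    (y : E) : Set (EuclideanSpace ℝ (Fin M) × EuclideanSpace ℝ (Fin L)) :=
  {p | α ‖y‖ ≤ ∑ i, p.1 i * φ i y ∧ (∑ i, p.1 i * φ i y) ≤ β ‖y‖ ∧
    γ ‖y‖ ≤ ∑ j, p.2 j * w j y ∧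
    (∑ i, p.1 i * fderiv ℝ (φ i) y (f y)) + (∑ j, p.2 j * w j y) ≤ 0}

lemma isLinearMap_sum_fst_mul {ι κ : Type*} [Fintype ι] (a : ι → ℝ) :
    IsLinearMap ℝ fun p : EuclideanSpace ℝ ι × EuclideanSpace ℝ κ => ∑ i, p.1 i * a i :=
  ⟨fun p q => by simp [add_mul, sum_add_distrib], fun c p => by simp [mul_sum, mul_assoc]⟩

lemma isLinearMap_sum_snd_mul {ι κ : Type*} [Fintype κ] (a : κ → ℝ) :
    IsLinearMap ℝ fun p : EuclideanSpace ℝ ι × EuclideanSpace ℝ κ => ∑ j, p.2 j * a j :=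
  ⟨fun p q => by simp [add_mul, sum_add_distrib], fun c p => by simp [mul_sum, mul_assoc]⟩

lemma convex_lyapunovConstraints (α β γ : ℝ → ℝ) (φ : Fin M → E → ℝ) (w : Fin L → E → ℝ)
    (f : E → E) (y : E) : Convex ℝ (lyapunovConstraints α β γ φ w f y) := by
  have hV := isLinearMap_sum_fst_mul (κ := Fin L) fun i => φ i y
  have hW := isLinearMap_sum_snd_mul (ι := Fin M) fun j => w j y
  have hV' := isLinearMap_sum_fst_mul (κ := Fin L) fun i => fderiv ℝ (φ i) y (f y)
  exact (convex_halfSpace_ge hV _).inter <| (convex_halfSpace_le hV _).inter <|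
    (convex_halfSpace_ge hW _).inter <| convex_halfSpace_le (hV'.mk' _ + hW.mk' _).isLinear 0

lemma isClosed_lyapunovConstraints (α β γ : ℝ → ℝ) (φ : Fin M → E → ℝ) (w : Fin L → E → ℝ)
    (f : E → E) (y : E) : IsClosed (lyapunovConstraints α β γ φ w f y) := by
  simp only [lyapunovConstraints, ofPred_and]
  apply_rules [IsClosed.inter, isClosed_le] <;> fun_prop

lemma fderiv_sum_mul_apply {ι : Type*} [Fintype ι] {φ : ι → E → ℝ} {y : E}
    (hφ : ∀ i, DifferentiableAt ℝ (φ i) y) (l : ι → ℝ) (v : E) :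
    fderiv ℝ (fun z => ∑ i, l i * φ i z) y v = ∑ i, l i * fderiv ℝ (φ i) y v := by
  rw [fderiv_fun_sum fun i _ => (hφ i).const_mul (l i)]
  simp [fderiv_const_mul (hφ _)]

theorem lyapunov_certificate_of_forall_mem_lyapunovConstraints {n : ℕ}
    {f : EuclideanSpace ℝ (Fin n) → EuclideanSpace ℝ (Fin n)} {N : Set (EuclideanSpace ℝ (Fin n))}
    (hN : N ∈ 𝓝 0) {α β γ : ℝ → ℝ} (hα : IsClassK α) (hβ : IsClassK β) (hγ : IsClassK γ)
    {φ : Fin M → EuclideanSpace ℝ (Fin n) → ℝ} (hφ : ∀ i, Differentiable ℝ (φ i))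
    {w : Fin L → EuclideanSpace ℝ (Fin n) → ℝ} {l : EuclideanSpace ℝ (Fin M)}
    {c : EuclideanSpace ℝ (Fin L)} (hmem : ∀ y ∈ N, (l, c) ∈ lyapunovConstraints α β γ φ w f y) :
    (∀ y ∈ N, y ≠ 0 → 0 < ∑ i, l i * φ i y) ∧
    (∀ y ∈ N, y ≠ 0 → 0 < ∑ j, c j * w j y) ∧
    (∀ y ∈ N, fderiv ℝ (fun z => ∑ i, l i * φ i z) y (f y) + ∑ j, c j * w j y ≤ 0) ∧
    AsymptoticallyStable n f := by
  have hdecr : ∀ y ∈ N, fderiv ℝ (fun z => ∑ i, l i * φ i z) y (f y) + ∑ j, c j * w j y ≤ 0 := by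
    intro y hy
    rw [fderiv_sum_mul_apply fun i => hφ i y]
    exact (hmem y hy).2.2.2
  refine ⟨fun y hy hy0 => (hα.pos (norm_pos_iff.2 hy0)).trans_le (hmem y hy).1,
    fun y hy hy0 => (hγ.pos (norm_pos_iff.2 hy0)).trans_le (hmem y hy).2.2.1, hdecr, ?_⟩
  refine (lyapunovStable_of_isClassK_bounds hN hα hβ
    (Differentiable.fun_sum fun i _ => (hφ i).const_mul (l i))
    (fun y hy => (hmem y hy).1) (fun y hy => (hmem y hy).2.1) fun y hy => ?_).asymptoticallyStable
  linarith [hdecr y hy, (hmem y hy).2.2.1, hγ.nonneg (norm_nonneg y)]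

end Constraints

theorem stmt_2_general
    (n M L : ℕ)
    (f : EuclideanSpace ℝ (Fin n) → EuclideanSpace ℝ (Fin n))
    (N : Set (EuclideanSpace ℝ (Fin n)))
    (hNnbd : N ∈ nhds (0 : EuclideanSpace ℝ (Fin n)))
    (α β γ : ℝ → ℝ) (hα : IsClassK α) (hβ : IsClassK β) (hγ : IsClassK γ)
    (φ : Fin M → EuclideanSpace ℝ (Fin n) → ℝ)
    (hφ : ∀ i, ContDiff ℝ 1 (φ i)) (hφ0 : ∀ i, φ i 0 = 0)
    (w : Fin L → EuclideanSpace ℝ (Fin n) → ℝ)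
    (hw0 : ∀ j, w j 0 = 0)
    (ψ : EuclideanSpace ℝ (Fin M) × EuclideanSpace ℝ (Fin L) → ℝ)
    (hψcont : Continuous ψ)
    (hψstrict : StrictConvexOn ℝ Set.univ ψ)
    (hψcoercive : ∀ C : ℝ, ∃ R : ℝ, ∀ p : EuclideanSpace ℝ (Fin M) × EuclideanSpace ℝ (Fin L),
      R ≤ ‖p‖ → C ≤ ψ p)
    -- the feasible set of the asymptotic-stability semi-infinite program
    (G : Set (EuclideanSpace ℝ (Fin M) × EuclideanSpace ℝ (Fin L)))
    (hG : G = {p | ∀ y ∈ N,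
      α ‖y‖ ≤ ∑ i, p.1 i * φ i y ∧ (∑ i, p.1 i * φ i y) ≤ β ‖y‖ ∧
      γ ‖y‖ ≤ ∑ j, p.2 j * w j y ∧
      (∑ i, p.1 i * fderiv ℝ (φ i) y (f y)) + (∑ j, p.2 j * w j y) ≤ 0})
    (hGint : (interior G).Nonempty)
    -- the relaxed feasible sets
    (Gpt : (Fin (M + L) → EuclideanSpace ℝ (Fin n)) →
      Set (EuclideanSpace ℝ (Fin M) × EuclideanSpace ℝ (Fin L)))
    (hGpt : ∀ ys, Gpt ys = {p | ∀ k : Fin (M + L),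
      α ‖ys k‖ ≤ ∑ i, p.1 i * φ i (ys k) ∧ (∑ i, p.1 i * φ i (ys k)) ≤ β ‖ys k‖ ∧
      γ ‖ys k‖ ≤ ∑ j, p.2 j * w j (ys k) ∧
      (∑ i, p.1 i * fderiv ℝ (φ i) (ys k) (f (ys k))) + (∑ j, p.2 j * w j (ys k)) ≤ 0})
    -- the relaxed value map Φ
    (Φ : (Fin (M + L) → EuclideanSpace ℝ (Fin n)) → ℝ)
    (hΦ : ∀ ys, Φ ys = sInf (ψ '' Gpt ys))
    -- (y₁*, …, y_{M+L}*) attains the supremum of Φ over N^{M+L}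
    (ystar : Fin (M + L) → EuclideanSpace ℝ (Fin n)) (hystarN : ∀ k, ystar k ∈ N)
    (hystarmax : ∀ ys : Fin (M + L) → EuclideanSpace ℝ (Fin n),
      (∀ k, ys k ∈ N) → Φ ys ≤ Φ ystar)
    -- (λ*, c*) minimizes ψ over G(y₁*, …, y_{M+L}*)
    (lstar : EuclideanSpace ℝ (Fin M)) (cstar : EuclideanSpace ℝ (Fin L))
    (hpstarFeas : (lstar, cstar) ∈ Gpt ystar)
    (hpstarMin : ∀ p ∈ Gpt ystar, ψ (lstar, cstar) ≤ ψ p)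
    -- the functions V and W
    (V : EuclideanSpace ℝ (Fin n) → ℝ) (hV : ∀ z, V z = ∑ i, lstar i * φ i z)
    (W : EuclideanSpace ℝ (Fin n) → ℝ) (hW : ∀ z, W z = ∑ j, cstar j * w j z) :
    V 0 = 0 ∧ W 0 = 0 ∧
    (∀ y ∈ N, y ≠ 0 → 0 < V y) ∧
    (∀ y ∈ N, y ≠ 0 → 0 < W y) ∧
    (∀ y ∈ N, fderiv ℝ V y (f y) + W y ≤ 0) ∧
    AsymptoticallyStable n f := by
  obtain rfl : V = fun z => ∑ i, lstar i * φ i z := funext hV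
  obtain rfl : W = fun z => ∑ j, cstar j * w j z := funext hW
  have hφd : ∀ i, Differentiable ℝ (φ i) := fun i => (hφ i).differentiable one_ne_zero
  have hG' : G = ⋂ y : N, lyapunovConstraints α β γ φ w f y := by
    ext p; simp [hG, lyapunovConstraints]
  have hGpt' : ∀ ys, Gpt ys = ⋂ k, lyapunovConstraints α β γ φ w f (ys k) := fun ys => by
    ext p; simp [hGpt, lyapunovConstraints]
  rw [hGpt'] at hpstarFeas hpstarMin
  have hΦstar : Φ ystar = ψ (lstar, cstar) := by
    rw [hΦ, hGpt']
    exact IsLeast.csInf_eq ⟨mem_image_of_mem ψ hpstarFeas, forall_mem_image.2 hpstarMin⟩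
  have : Nonempty N := ⟨⟨0, mem_of_mem_nhds hNnbd⟩⟩
  have hmem : (lstar, cstar) ∈ G := by
    have hGne := hGint.mono interior_subset
    rw [hG'] at hGne ⊢
    refine mem_iInter_of_forall_sInf_image_le (C := fun y : N => lyapunovConstraints α β γ φ w f y)
      (ys₀ := fun k => ⟨ystar k, hystarN k⟩) (by simp)
      (fun y => convex_lyapunovConstraints ..) (fun y => isClosed_lyapunovConstraints ..)
      hGne hψcont hψstrict
      (tendsto_cocompact_atTop_of_coercive hψcoercive) hpstarFeas hpstarMin fun ys => ?_
    have := hystarmax (fun k => ys k) fun k => (ys k).2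
    rwa [hΦstar, hΦ, hGpt'] at this
  rw [hG] at hmem
  exact ⟨by simp [hφ0], by simp [hw0],
    lyapunov_certificate_of_forall_mem_lyapunovConstraints hNnbd hα hβ hγ hφd hmem⟩

theorem stmt_2
    (n M L : ℕ) (hn : 1 ≤ n) (hM : 1 ≤ M) (hL : 1 ≤ L)
    (f : EuclideanSpace ℝ (Fin n) → EuclideanSpace ℝ (Fin n))
    (hfLip : ∃ K : NNReal, LipschitzWith K f) (hf0 : f 0 = 0)
    (N : Set (EuclideanSpace ℝ (Fin n))) (hNcpt : IsCompact N)
    (hNnbd : N ∈ nhds (0 : EuclideanSpace ℝ (Fin n)))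
    (α β γ : ℝ → ℝ) (hα : IsClassK α) (hβ : IsClassK β) (hγ : IsClassK γ)
    (φ : Fin M → EuclideanSpace ℝ (Fin n) → ℝ)
    (hφ : ∀ i, ContDiff ℝ 1 (φ i)) (hφ0 : ∀ i, φ i 0 = 0)
    (w : Fin L → EuclideanSpace ℝ (Fin n) → ℝ)
    (hw : ∀ j, ContDiff ℝ 1 (w j)) (hw0 : ∀ j, w j 0 = 0)
    (ψ : EuclideanSpace ℝ (Fin M) × EuclideanSpace ℝ (Fin L) → ℝ)
    (hψcont : Continuous ψ) (hψnonneg : ∀ p, 0 ≤ ψ p)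
    (hψstrict : StrictConvexOn ℝ Set.univ ψ)
    (hψcoercive : ∀ C : ℝ, ∃ R : ℝ, ∀ p : EuclideanSpace ℝ (Fin M) × EuclideanSpace ℝ (Fin L),
      R ≤ ‖p‖ → C ≤ ψ p)
    -- the feasible set of the asymptotic-stability semi-infinite program
    (G : Set (EuclideanSpace ℝ (Fin M) × EuclideanSpace ℝ (Fin L)))
    (hG : G = {p | ∀ y ∈ N,
      α ‖y‖ ≤ ∑ i, p.1 i * φ i y ∧ (∑ i, p.1 i * φ i y) ≤ β ‖y‖ ∧
      γ ‖y‖ ≤ ∑ j, p.2 j * w j y ∧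
      (∑ i, p.1 i * fderiv ℝ (φ i) y (f y)) + (∑ j, p.2 j * w j y) ≤ 0})
    (hGint : (interior G).Nonempty)
    -- the relaxed feasible sets
    (Gpt : (Fin (M + L) → EuclideanSpace ℝ (Fin n)) →
      Set (EuclideanSpace ℝ (Fin M) × EuclideanSpace ℝ (Fin L)))
    (hGpt : ∀ ys, Gpt ys = {p | ∀ k : Fin (M + L),
      α ‖ys k‖ ≤ ∑ i, p.1 i * φ i (ys k) ∧ (∑ i, p.1 i * φ i (ys k)) ≤ β ‖ys k‖ ∧
      γ ‖ys k‖ ≤ ∑ j, p.2 j * w j (ys k) ∧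
      (∑ i, p.1 i * fderiv ℝ (φ i) (ys k) (f (ys k))) + (∑ j, p.2 j * w j (ys k)) ≤ 0})
    -- the relaxed value map Φ
    (Φ : (Fin (M + L) → EuclideanSpace ℝ (Fin n)) → ℝ)
    (hΦ : ∀ ys, Φ ys = sInf (ψ '' Gpt ys))
    -- (y₁*, …, y_{M+L}*) attains the supremum of Φ over N^{M+L}
    (ystar : Fin (M + L) → EuclideanSpace ℝ (Fin n)) (hystarN : ∀ k, ystar k ∈ N)
    (hystarmax : ∀ ys : Fin (M + L) → EuclideanSpace ℝ (Fin n),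
      (∀ k, ys k ∈ N) → Φ ys ≤ Φ ystar)
    -- (λ*, c*) minimizes ψ over G(y₁*, …, y_{M+L}*)
    (lstar : EuclideanSpace ℝ (Fin M)) (cstar : EuclideanSpace ℝ (Fin L))
    (hpstarFeas : (lstar, cstar) ∈ Gpt ystar)
    (hpstarMin : ∀ p ∈ Gpt ystar, ψ (lstar, cstar) ≤ ψ p)
    -- the functions V and W
    (V : EuclideanSpace ℝ (Fin n) → ℝ) (hV : ∀ z, V z = ∑ i, lstar i * φ i z)
    (W : EuclideanSpace ℝ (Fin n) → ℝ) (hW : ∀ z, W z = ∑ j, cstar j * w j z) :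
    V 0 = 0 ∧ W 0 = 0 ∧
    (∀ y ∈ N, y ≠ 0 → 0 < V y) ∧
    (∀ y ∈ N, y ≠ 0 → 0 < W y) ∧
    (∀ y ∈ N, fderiv ℝ V y (f y) + W y ≤ 0) ∧
    AsymptoticallyStable n f :=
  stmt_2_general n M L f N hNnbd α β γ hα hβ hγ φ hφ hφ0 w hw0 ψ hψcont hψstrict hψcoercive G hG
    hGint Gpt hGpt Φ hΦ ystar hystarN hystarmax lstar cstar hpstarFeas hpstarMin V hV W hW
end

section
/- Suppose Slater's condition holds: there exists ξ̂ ∈ Ξ with g(ξ̂, θ) < 0 for every θ ∈ Θ. Suppose in addition that ψ is strictly convex and coercive (ψ(ξ) → +∞ as ‖ξ‖ → +∞). If (θ₁*, …, θ_ν*) ∈ Θ^ν attains the supremum over Θ^ν of the relaxed value map (θ₁, …, θ_ν) ↦ inf { ψ(ξ) : ξ ∈ Ξ, g(ξ, θ_k) ≤ 0 for all k = 1, …, ν }, and ξ* minimizes ψ over { ξ ∈ Ξ : g(ξ, θ_k*) ≤ 0 for all k = 1, …, ν }, then ξ* is feasible for the full semi-infinite program (g(ξ*, θ) ≤ 0 for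 every θ ∈ Θ) and ξ* minimizes ψ over the feasible set { ξ ∈ Ξ : g(ξ, θ) ≤ 0 for all θ ∈ Θ }. -/
/-!
Suppose `ξ*` violates some `θ̄ ∈ Θ`. Append `θ̄` to `θ*` and let `x` minimize `ψ` over the feasible
set of these `ν + 1` constraints; it exists by coercivity, the set being nonempty by Slater's
condition. As `x ≠ ξ*` is feasible for `θ*` and `ψ` is strictly convex, `ψ ξ* < ψ x`. By Helly's
theorem in `ℝ^ν`, applied to the `ν + 1` constraint sets together with the convex set
`{ψ < ψ x}`, one constraint can be dropped without lowering the optimal value `ψ x`. The remaining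
`ν` constraints form a point of `Θ^ν` whose relaxed value exceeds that of `θ*`, a contradiction.
-/

open Set Filter Module

theorem IsMinOn.csInf_image_eq {α : Type*} {s : Set α} {f : α → ℝ} {x : α}
    (hmin : IsMinOn f s x) (hx : x ∈ s) : sInf (f '' s) = f x := by
  rw [sInf_image']
  exact hmin.iInf_eq hx

theorem StrictConvexOn.lt_of_isMinOn_of_ne {E : Type*} [AddCommGroup E] [Module ℝ E]
    {s : Set E} {f : E → ℝ} {x y : E} (hf : StrictConvexOn ℝ s f) (hmin : IsMinOn f s x)
    (hx : x ∈ s) (hy : y ∈ s) (hne : y ≠ x) : f x < f y :=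
  (hmin hy).lt_of_ne fun h => hne (hf.eq_of_isMinOn (fun _ hz => h ▸ hmin hz) hmin hy hx)

theorem IsClosed.exists_isMinOn_of_coercive {E : Type*} [NormedAddCommGroup E] [ProperSpace E]
    {s : Set E} (hs : IsClosed s) (hne : s.Nonempty) {f : E → ℝ} (hf : Continuous f)
    (hcoer : ∀ A : ℝ, ∃ R : ℝ, ∀ x, R ≤ ‖x‖ → A ≤ f x) : ∃ x ∈ s, IsMinOn f s x := by
  obtain ⟨x₀, hx₀⟩ := hne
  obtain ⟨R, hR⟩ := hcoer (f x₀)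
  refine hf.continuousOn.exists_isMinOn' hs hx₀ (Eventually.filter_mono inf_le_left ?_)
  exact (tendsto_norm_cocompact_atTop.eventually_ge_atTop R).mono hR

section Constraints

variable {E ι : Type*} {Ξ : Set E} {G : ι → E → ℝ}

theorem IsClosed.sep_forall_nonpos [TopologicalSpace E] (hΞ : IsClosed Ξ)
    (hG : ∀ i, Continuous (G i)) : IsClosed {ξ ∈ Ξ | ∀ i, G i ξ ≤ 0} := by
  convert hΞ.inter (isClosed_iInter fun i => _root_.isClosed_le (hG i) (continuous_const (y := 0)))
    using 1
  ext; simp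

theorem Convex.sep_forall_nonpos [AddCommGroup E] [Module ℝ E] (hΞ : Convex ℝ Ξ)
    (hG : ∀ i, ConvexOn ℝ Ξ (G i)) : Convex ℝ {ξ ∈ Ξ | ∀ i, G i ξ ≤ 0} := by
  convert hΞ.inter (convex_iInter fun i => (hG i).convex_le 0) using 1
  ext; simp +contextual

end Constraints

theorem Convex.inter_iInter_nonempty_of_forall_ne {𝕜 E ι : Type*} [Field 𝕜] [LinearOrder 𝕜]
    [IsStrictOrderedRing 𝕜] [AddCommGroup E] [Module 𝕜 E] [FiniteDimensional 𝕜 E] [Fintype ι]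
    (hcard : finrank 𝕜 E < Fintype.card ι) {K : Set E} {C : ι → Set E}
    (hK : Convex 𝕜 K) (hC : ∀ i, Convex 𝕜 (C i)) (hC_ne : (⋂ i, C i).Nonempty)
    (hK_ne : ∀ i, (K ∩ ⋂ j ≠ i, C j).Nonempty) :
    (K ∩ ⋂ i, C i).Nonempty := by
  classical
  let F : Option ι → Set E := fun o => o.elim K C
  suffices h : (⋂ o ∈ (Finset.univ : Finset (Option ι)), F o).Nonempty by
    simpa [F, iInter_option] using h
  refine Convex.helly_theorem' (fun o _ => o.rec hK hC) fun I _ hI => ?_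
  -- a subfamily of at most `finrank 𝕜 E + 1` of the `card ι + 1` sets misses one of them
  obtain ⟨o, ho⟩ : ∃ o, o ∉ I := by
    by_contra! hall
    have := Finset.card_le_card (fun o _ => hall o : Finset.univ ⊆ I)
    simp only [Finset.card_univ, Fintype.card_option] at this
    omega
  cases o with
  | none =>
    obtain ⟨x, hx⟩ := hC_ne
    refine ⟨x, mem_iInter₂.2 fun o' ho' => ?_⟩
    cases o' with
    | none => exact absurd ho' ho
    | some j => exact mem_iInter.1 hx j
  | some i =>
    obtain ⟨x, hxK, hx⟩ := hK_ne i
    refine ⟨x, mem_iInter₂.2 fun o' ho' => ?_⟩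
    cases o' with
    | none => exact hxK
    | some j => exact mem_iInter₂.1 hx j fun hji => ho (hji ▸ ho')

theorem IsMinOn.exists_redundant_constraint {E : Type*} [AddCommGroup E] [Module ℝ E]
    [FiniteDimensional ℝ E] {n : ℕ} (hn : finrank ℝ E ≤ n) {Ξ : Set E} {ψ : E → ℝ}
    {G : Fin (n + 1) → E → ℝ} (hψ : ConvexOn ℝ Ξ ψ) (hG : ∀ i, ConvexOn ℝ Ξ (G i))
    {x : E} (hx : x ∈ {ξ ∈ Ξ | ∀ i, G i ξ ≤ 0}) (hmin : IsMinOn ψ {ξ ∈ Ξ | ∀ i, G i ξ ≤ 0} x) :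
    ∃ i₀ : Fin (n + 1), IsMinOn ψ {ξ ∈ Ξ | ∀ k, G (i₀.succAbove k) ξ ≤ 0} x := by
  by_contra! hdrop
  simp only [isMinOn_iff, not_forall, not_le] at hdrop
  obtain ⟨ξ, ⟨hξΞ, hξψ⟩, hξG⟩ := Convex.inter_iInter_nonempty_of_forall_ne
    (by simpa using Nat.lt_succ_of_le hn)
    (hψ.convex_lt (ψ x)) (fun i => (hG i).convex_le 0) ⟨x, mem_iInter.2 fun i => ⟨hx.1, hx.2 i⟩⟩
    fun i => by
      obtain ⟨ξ, ⟨hξΞ, hξG⟩, hξψ⟩ := hdrop i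
      refine ⟨ξ, ⟨hξΞ, hξψ⟩, mem_iInter₂.2 fun j hj => ⟨hξΞ, ?_⟩⟩
      obtain ⟨k, rfl⟩ := Fin.exists_succAbove_eq hj
      exact hξG k
  exact (hmin ⟨hξΞ, fun i => (mem_iInter.1 hξG i).2⟩).not_gt hξψ

theorem stmt_11_general
    (ν μ : ℕ)
    (Ξ : Set (EuclideanSpace ℝ (Fin ν)))
    (hΞcl : IsClosed Ξ) (hΞconv : Convex ℝ Ξ)
    (Θ : Set (EuclideanSpace ℝ (Fin μ)))
    (ψ : EuclideanSpace ℝ (Fin ν) → ℝ)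
    (hψcont : Continuous ψ)
    (g : EuclideanSpace ℝ (Fin ν) → EuclideanSpace ℝ (Fin μ) → ℝ)
    (hgcont : Continuous fun p : EuclideanSpace ℝ (Fin ν) × EuclideanSpace ℝ (Fin μ) =>
      g p.1 p.2)
    (hgconv : ∀ θ ∈ Θ, ConvexOn ℝ Set.univ fun ξ => g ξ θ)
    -- Slater's condition
    (hSlater : ∃ ξhat ∈ Ξ, ∀ θ ∈ Θ, g ξhat θ < 0)
    -- ψ is in addition strictly convex and coercive
    (hψstrict : StrictConvexOn ℝ Set.univ ψ)
    (hψcoercive : ∀ A : ℝ, ∃ R : ℝ, ∀ ξ, R ≤ ‖ξ‖ → A ≤ ψ ξ)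
    -- (θ₁*, …, θ_ν*) attains the supremum of the relaxed value map over Θ^ν
    (θstar : Fin ν → EuclideanSpace ℝ (Fin μ)) (hθstarΘ : ∀ k, θstar k ∈ Θ)
    (hθstarmax : ∀ θs : Fin ν → EuclideanSpace ℝ (Fin μ), (∀ k, θs k ∈ Θ) →
      sInf (ψ '' {ξ ∈ Ξ | ∀ k : Fin ν, g ξ (θs k) ≤ 0}) ≤
        sInf (ψ '' {ξ ∈ Ξ | ∀ k : Fin ν, g ξ (θstar k) ≤ 0}))
    -- ξ* minimizes ψ over the relaxed feasible set
    (ξstar : EuclideanSpace ℝ (Fin ν))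
    (hξstarΞ : ξstar ∈ Ξ) (hξstarFeas : ∀ k : Fin ν, g ξstar (θstar k) ≤ 0)
    (hξstarMin : ∀ ξ ∈ Ξ, (∀ k : Fin ν, g ξ (θstar k) ≤ 0) → ψ ξstar ≤ ψ ξ) :
    -- ξ* is feasible for the full semi-infinite program and minimizes ψ over its feasible set
    (∀ θ ∈ Θ, g ξstar θ ≤ 0) ∧
    (∀ ξ ∈ Ξ, (∀ θ ∈ Θ, g ξ θ ≤ 0) → ψ ξstar ≤ ψ ξ) := by
  refine ⟨fun θbar hθbar => ?_, fun ξ hξ hfeas => hξstarMin ξ hξ fun k => hfeas _ (hθstarΘ k)⟩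
  by_contra! hviol
  obtain ⟨ξhat, hξhatΞ, hξhat⟩ := hSlater
  set θ' : Fin (ν + 1) → EuclideanSpace ℝ (Fin μ) := Fin.snoc θstar θbar
  have hθ'Θ : ∀ i, θ' i ∈ Θ := Fin.lastCases (by simpa [θ'] using hθbar)
    fun k => by simpa [θ'] using hθstarΘ k
  have hgconv' : ∀ θ ∈ Θ, ConvexOn ℝ Ξ fun ξ => g ξ θ :=
    fun θ hθ => (hgconv θ hθ).subset (subset_univ Ξ) hΞconv
  obtain ⟨x, hx, hxmin⟩ := (hΞcl.sep_forall_nonpos fun i => hgcont.comp (.prodMk_left (θ' i)))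
    |>.exists_isMinOn_of_coercive ⟨ξhat, hξhatΞ, fun i => (hξhat _ (hθ'Θ i)).le⟩ hψcont hψcoercive
  have hξstarMin' : IsMinOn ψ {ξ ∈ Ξ | ∀ k, g ξ (θstar k) ≤ 0} ξstar :=
    fun ξ hξ => hξstarMin ξ hξ.1 hξ.2
  have hlt : ψ ξstar < ψ x := by
    have hxbar : g x θbar ≤ 0 := by simpa [θ'] using hx.2 (Fin.last ν)
    refine (hψstrict.subset (subset_univ _) (hΞconv.sep_forall_nonpos fun k =>
      hgconv' _ (hθstarΘ k))).lt_of_isMinOn_of_ne hξstarMin' ⟨hξstarΞ, hξstarFeas⟩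
      ⟨hx.1, fun k => by simpa [θ'] using hx.2 k.castSucc⟩ ?_
    exact ne_of_apply_ne (g · θbar) (hxbar.trans_lt hviol).ne
  obtain ⟨i₀, hi₀⟩ := hxmin.exists_redundant_constraint (by simp)
    (hψstrict.convexOn.subset (subset_univ _) hΞconv) (fun i => hgconv' _ (hθ'Θ i)) hx
  have hmax := hθstarmax (fun k => θ' (i₀.succAbove k)) fun k => hθ'Θ _
  rw [hi₀.csInf_image_eq ⟨hx.1, fun k => hx.2 _⟩,
    hξstarMin'.csInf_image_eq ⟨hξstarΞ, hξstarFeas⟩] at hmax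
  exact hmax.not_gt hlt

theorem stmt_11
    (ν μ : ℕ) (hν : 1 ≤ ν) (hμ : 1 ≤ μ)
    (Ξ : Set (EuclideanSpace ℝ (Fin ν)))
    (hΞne : Ξ.Nonempty) (hΞcl : IsClosed Ξ) (hΞconv : Convex ℝ Ξ)
    (Θ : Set (EuclideanSpace ℝ (Fin μ)))
    (hΘne : Θ.Nonempty) (hΘcpt : IsCompact Θ)
    (ψ : EuclideanSpace ℝ (Fin ν) → ℝ)
    (hψcont : Continuous ψ) (hψnonneg : ∀ ξ, 0 ≤ ψ ξ) (hψconv : ConvexOn ℝ Set.univ ψ)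
    (g : EuclideanSpace ℝ (Fin ν) → EuclideanSpace ℝ (Fin μ) → ℝ)
    (hgcont : Continuous fun p : EuclideanSpace ℝ (Fin ν) × EuclideanSpace ℝ (Fin μ) =>
      g p.1 p.2)
    (hgconv : ∀ θ ∈ Θ, ConvexOn ℝ Set.univ fun ξ => g ξ θ)
    -- Slater's condition
    (hSlater : ∃ ξhat ∈ Ξ, ∀ θ ∈ Θ, g ξhat θ < 0)
    -- ψ is in addition strictly convex and coercive
    (hψstrict : StrictConvexOn ℝ Set.univ ψ)
    (hψcoercive : ∀ A : ℝ, ∃ R : ℝ, ∀ ξ, R ≤ ‖ξ‖ → A ≤ ψ ξ)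
    -- (θ₁*, …, θ_ν*) attains the supremum of the relaxed value map over Θ^ν
    (θstar : Fin ν → EuclideanSpace ℝ (Fin μ)) (hθstarΘ : ∀ k, θstar k ∈ Θ)
    (hθstarmax : ∀ θs : Fin ν → EuclideanSpace ℝ (Fin μ), (∀ k, θs k ∈ Θ) →
      sInf (ψ '' {ξ ∈ Ξ | ∀ k : Fin ν, g ξ (θs k) ≤ 0}) ≤
        sInf (ψ '' {ξ ∈ Ξ | ∀ k : Fin ν, g ξ (θstar k) ≤ 0}))
    -- ξ* minimizes ψ over the relaxed feasible set
    (ξstar : EuclideanSpace ℝ (Fin ν))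
    (hξstarΞ : ξstar ∈ Ξ) (hξstarFeas : ∀ k : Fin ν, g ξstar (θstar k) ≤ 0)
    (hξstarMin : ∀ ξ ∈ Ξ, (∀ k : Fin ν, g ξ (θstar k) ≤ 0) → ψ ξstar ≤ ψ ξ) :
    -- ξ* is feasible for the full semi-infinite program and minimizes ψ over its feasible set
    (∀ θ ∈ Θ, g ξstar θ ≤ 0) ∧
    (∀ ξ ∈ Ξ, (∀ θ ∈ Θ, g ξ θ ≤ 0) → ψ ξstar ≤ ψ ξ) :=
  stmt_11_general ν μ Ξ hΞcl hΞconv Θ ψ hψcont g hgcont hgconv hSlater hψstrict hψcoercive θstar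
    hθstarΘ hθstarmax ξstar hξstarΞ hξstarFeas hξstarMin
end
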